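/- arXiv:1107.0336 — 5 statements merged into one kernel-verified Lean document; each statement's English description precedes it below -/
import Mathlib

section
/- Let K be a field of characteristic different from 2 and A a finite-dimensional commutative K-algebra. Then μ^sym(A/K) ≤ 2·μ(A/K). -/
/-!
Polarization: since `2` is invertible in `K`, each product `φ(x) ψ(y)` of a bilinear algorithm
can be traded for the two squares `(φ + ψ)(x) (φ + ψ)(y)` and `(φ - ψ)(x) (φ - ψ)(y)`, because
`(a + b)(c + d) - (a - b)(c - d) = 2 (a d + b c)`. The resulting symmetric algorithm computes
`(x y + y x) / 2`, which is `x y` as `A` is commutative.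
-/

open Finset

/-- The bilinear complexity of a `K`-algebra `A`. -/
noncomputable def mu (K A : Type*) [Field K] [NonUnitalNonAssocRing A] [Module K A] : ℕ :=
  sInf {n : ℕ | ∃ (φ ψ : Fin n → (A →ₗ[K] K)) (w : Fin n → A),
    ∀ x y : A, x * y = ∑ i, (φ i x * ψ i y) • w i}

/-- The symmetric bilinear complexity of a `K`-algebra `A`. -/
noncomputable def muSym (K A : Type*) [Field K] [NonUnitalNonAssocRing A] [Module K A] : ℕ :=
  sInf {n : ℕ | ∃ (φ : Fin n → (A →ₗ[K] K)) (w : Fin n → A),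
    ∀ x y : A, x * y = ∑ i, (φ i x * φ i y) • w i}

section BilinearAlgorithm

variable (K A : Type*) [Field K] [NonUnitalNonAssocRing A] [Module K A]

def HasBilinearAlgorithm (n : ℕ) : Prop :=
  ∃ (φ ψ : Fin n → (A →ₗ[K] K)) (w : Fin n → A), ∀ x y : A, x * y = ∑ i, (φ i x * ψ i y) • w i

def HasSymmBilinearAlgorithm (n : ℕ) : Prop :=
  ∃ (φ : Fin n → (A →ₗ[K] K)) (w : Fin n → A), ∀ x y : A, x * y = ∑ i, (φ i x * φ i y) • w i

theorem mu_eq_sInf : mu K A = sInf {n | HasBilinearAlgorithm K A n} := rfl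

theorem muSym_eq_sInf : muSym K A = sInf {n | HasSymmBilinearAlgorithm K A n} := rfl

variable {K A}

theorem HasSymmBilinearAlgorithm.hasBilinearAlgorithm {n : ℕ}
    (h : HasSymmBilinearAlgorithm K A n) : HasBilinearAlgorithm K A n :=
  let ⟨φ, w, hw⟩ := h
  ⟨φ, φ, w, hw⟩

end BilinearAlgorithm

theorem polarization_smul {K M : Type*} [Field K] [AddCommGroup M] [Module K M] (h2 : (2 : K) ≠ 0)
    (a b c d : K) (m : M) :
    ((a + b) * (c + d)) • (4 : K)⁻¹ • m + ((a - b) * (c - d)) • (-(4 : K)⁻¹) • m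
      = (2 : K)⁻¹ • (a * d) • m + (2 : K)⁻¹ • (c * b) • m := by
  simp only [smul_smul, ← add_smul]
  congr 1
  rw [show (4 : K) = 2 * 2 by norm_num]
  field_simp
  ring

theorem HasBilinearAlgorithm.hasSymmBilinearAlgorithm_add_self {K A : Type*} [Field K]
    [NonUnitalNonAssocCommRing A] [Module K A] (h2 : (2 : K) ≠ 0) {n : ℕ}
    (h : HasBilinearAlgorithm K A n) : HasSymmBilinearAlgorithm K A (n + n) := by
  obtain ⟨φ, ψ, w, hw⟩ := h
  refine ⟨Fin.append (fun i => φ i + ψ i) (fun i => φ i - ψ i),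
    Fin.append (fun i => (4 : K)⁻¹ • w i) (fun i => (-(4 : K)⁻¹) • w i), fun x y => ?_⟩
  simp only [Fin.sum_univ_add, Fin.append_left, Fin.append_right, LinearMap.add_apply,
    LinearMap.sub_apply]
  rw [← sum_add_distrib, sum_congr rfl fun i _ => polarization_smul h2 _ _ _ _ _, sum_add_distrib,
    ← smul_sum, ← smul_sum, ← hw x y, ← hw y x, mul_comm y x, ← add_smul, ← two_mul,
    mul_inv_cancel₀ h2, one_smul]

theorem muSym_le_two_mul_mu {K A : Type*} [Field K] [NonUnitalNonAssocCommRing A] [Module K A]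
    (h2 : (2 : K) ≠ 0) : muSym K A ≤ 2 * mu K A := by
  rw [mu_eq_sInf, muSym_eq_sInf]
  by_cases hne : {n | HasBilinearAlgorithm K A n}.Nonempty
  · rw [two_mul]
    exact Nat.sInf_le ((Nat.sInf_mem hne).hasSymmBilinearAlgorithm_add_self h2)
  · have hsym : {n | HasSymmBilinearAlgorithm K A n} = ∅ :=
      Set.eq_empty_of_forall_notMem fun n hn => hne ⟨n, hn.hasBilinearAlgorithm⟩
    rw [hsym, Nat.sInf_empty]
    exact Nat.zero_le _

theorem stmt_1_general (K : Type*) [Field K] (h2 : ringChar K ≠ 2)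
    (A : Type*) [CommRing A] [Algebra K A] :
    muSym K A ≤ 2 * mu K A :=
  muSym_le_two_mul_mu (Ring.two_ne_zero h2)

/-- If `char K ≠ 2` and `A` is a finite-dimensional commutative `K`-algebra,
then `μ^sym(A/K) ≤ 2 μ(A/K)`. -/
theorem stmt_1 (K : Type*) [Field K] (h2 : ringChar K ≠ 2)
    (A : Type*) [CommRing A] [Algebra K A] [FiniteDimensional K A] :
    muSym K A ≤ 2 * mu K A :=
  stmt_1_general K h2 A
end

section
/- Let K be a field and A a finite-dimensional K-algebra with no zero-divisors (i.e., for nonzero x,y ∈ A one has xy ≠ 0). Then μ(A/K) ≥ 2·dim_K A − 1. -/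
open Finset

/-!
If `y ≠ 0` is killed by the forms `ψ i` for `i ∈ s`, then `x ↦ x * y` embeds `A` into the span
of the `w i` with `i ∉ s`, so `dim A + #s ≤ n`. As long as `#s < dim A` such a `y` exists, so taking
`#s = dim A - 1` gives `n ≥ 2 dim A - 1`.
-/

open Module Submodule

section BilinearAlgorithm

variable {K A ι : Type*} [Field K] [NonUnitalNonAssocRing A] [Module K A]

def IsBilinearAlgorithm [Fintype ι] (φ ψ : ι → A →ₗ[K] K) (w : ι → A) : Prop :=
  ∀ x y : A, x * y = ∑ i, (φ i x * ψ i y) • w i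

theorem IsBilinearAlgorithm.comp_equiv {κ : Type*} [Fintype ι] [Fintype κ]
    {φ ψ : ι → A →ₗ[K] K} {w : ι → A} (hw : IsBilinearAlgorithm φ ψ w) (e : κ ≃ ι) :
    IsBilinearAlgorithm (φ ∘ e) (ψ ∘ e) (w ∘ e) := fun x y => by
  rw [hw x y, ← e.sum_comp]
  rfl

theorem Module.Basis.isBilinearAlgorithm [Fintype ι] [IsScalarTower K A A] [SMulCommClass K A A]
    (b : Basis ι K A) :
    IsBilinearAlgorithm (fun p : ι × ι => b.coord p.1) (fun p => b.coord p.2)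
      (fun p => b p.1 * b p.2) := fun x y => by
  conv_lhs => rw [← b.sum_repr x, ← b.sum_repr y]
  simp only [sum_mul_sum, Fintype.sum_prod_type, Basis.coord_apply, smul_mul_smul_comm]

theorem exists_isBilinearAlgorithm_fin_mu (K A : Type*) [Field K] [NonUnitalNonAssocRing A]
    [Module K A] [IsScalarTower K A A] [SMulCommClass K A A] [FiniteDimensional K A] :
    ∃ (φ ψ : Fin (mu K A) → A →ₗ[K] K) (w : Fin (mu K A) → A), IsBilinearAlgorithm φ ψ w :=
  Nat.sInf_mem (s := {n | ∃ (φ ψ : Fin n → A →ₗ[K] K) (w : Fin n → A),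
      IsBilinearAlgorithm φ ψ w})
    ⟨_, _, _, _, (finBasis K A).isBilinearAlgorithm.comp_equiv (Fintype.equivFin _).symm⟩

theorem exists_ne_zero_forall_mem_apply_eq_zero {V : Type*} [AddCommGroup V] [Module K V]
    [FiniteDimensional K V] (ψ : ι → V →ₗ[K] K) {s : Finset ι} (hs : #s < finrank K V) :
    ∃ y ≠ 0, ∀ i ∈ s, ψ i y = 0 := by
  have hker : LinearMap.ker (LinearMap.pi fun i : s => ψ i) ≠ ⊥ :=
    LinearMap.ker_ne_bot_of_finrank_lt (by simpa using hs)
  obtain ⟨y, hy, hy0⟩ := (Submodule.ne_bot_iff _).mp hker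
  exact ⟨y, hy0, fun i hi => congrFun (LinearMap.mem_ker.mp hy) ⟨i, hi⟩⟩

theorem finrank_le_finrank_of_mul_mem [NoZeroDivisors A] [IsScalarTower K A A]
    [FiniteDimensional K A] {y : A} (hy : y ≠ 0) {W : Submodule K A} (hW : ∀ x, x * y ∈ W) :
    finrank K A ≤ finrank K W := by
  have hinj : Function.Injective (LinearMap.mulRight K y) := mul_left_injective₀ hy
  rw [← LinearMap.finrank_range_of_inj hinj]
  exact Submodule.finrank_mono (LinearMap.range_le_iff_comap.mpr (eq_top_iff.mpr fun x _ => hW x))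

namespace IsBilinearAlgorithm

variable [Fintype ι] {φ ψ : ι → A →ₗ[K] K} {w : ι → A}

theorem mul_mem_span_of_forall_mem_apply_eq_zero (hw : IsBilinearAlgorithm φ ψ w)
    {s : Finset ι} {y : A} (hy : ∀ i ∈ s, ψ i y = 0) (x : A) :
    x * y ∈ span K (Set.range fun i : {i // i ∉ s} => w i) := by
  classical
  rw [hw x y, ← sum_add_sum_compl s, sum_eq_zero fun i hi => by rw [hy i hi, mul_zero, zero_smul],
    zero_add]
  exact sum_smul_mem _ _ fun i hi => subset_span ⟨⟨i, mem_compl.mp hi⟩, rfl⟩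

theorem finrank_add_card_le [NoZeroDivisors A] [IsScalarTower K A A] [FiniteDimensional K A]
    (hw : IsBilinearAlgorithm φ ψ w) {s : Finset ι} {y : A} (hy0 : y ≠ 0)
    (hy : ∀ i ∈ s, ψ i y = 0) :
    finrank K A + #s ≤ Fintype.card ι := by
  classical
  have hle := (finrank_le_finrank_of_mul_mem hy0
    (hw.mul_mem_span_of_forall_mem_apply_eq_zero hy)).trans (finrank_range_le_card _)
  rw [Fintype.card_subtype_compl, Fintype.card_coe] at hle
  have := card_le_univ s
  omega

theorem two_mul_finrank_sub_one_le_card [NoZeroDivisors A] [IsScalarTower K A A]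
    [FiniteDimensional K A] (hw : IsBilinearAlgorithm φ ψ w) :
    2 * finrank K A - 1 ≤ Fintype.card ι := by
  obtain ⟨s, -, hs⟩ := exists_subset_card_eq
    (min_le_left (Fintype.card ι) (finrank K A - 1))
  rcases Nat.eq_zero_or_pos (finrank K A) with hd | hd
  · omega
  obtain ⟨y, hy0, hy⟩ := exists_ne_zero_forall_mem_apply_eq_zero ψ (s := s) (by omega)
  have := hw.finrank_add_card_le hy0 hy
  omega

end IsBilinearAlgorithm

end BilinearAlgorithm

/-- If the finite-dimensional `K`-algebra `A` has no zero-divisor,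
then `μ(A/K) ≥ 2 dim_K A - 1`. -/
theorem stmt_3 (K A : Type*) [Field K] [Ring A] [Algebra K A] [FiniteDimensional K A]
    (h : ∀ x y : A, x ≠ 0 → y ≠ 0 → x * y ≠ 0) :
    2 * Module.finrank K A - 1 ≤ mu K A := by
  have : NoZeroDivisors A := ⟨fun {x y} hxy => by
    by_contra! hne
    exact h x y hne.1 hne.2 hxy⟩
  obtain ⟨φ, ψ, w, hw⟩ := exists_isBilinearAlgorithm_fin_mu K A
  simpa using hw.two_mul_finrank_sub_one_le_card
end

section
/- There do not exist an integer n ≥ 0, elements w₁,…,wₙ ∈ 𝔽₄, and 𝔽₂-linear forms φ₁,…,φₙ : 𝔽₄ → 𝔽₂ such that for all x, y, z ∈ 𝔽₄ one has xyz = Σᵢ φᵢ(x)·φᵢ(y)·φᵢ(z)·wᵢ. In other words, the 𝔽₂-trilinear map 𝔽₄ × 𝔽₄ × 𝔽₄ → 𝔽₄, (x,y,z) ↦ xyz, admits no fully symmetric elementary decomposition. -/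
/-!
Put `x = y = z`: since `a³ = a` in `𝔽₂`, a symmetric decomposition would make `x ↦ x³` an
`𝔽₂`-linear map `x ↦ ∑ φᵢ(x) wᵢ`. But in `𝔽₄` every nonzero element is a cube root of unity,
so for `g ∉ {0, 1}` we get `1 = (1 + g)³ ≠ 1³ + g³ = 1 + 1 = 0`.
-/

open Finset

theorem ZMod.two_mul_self_mul_self (a : ZMod 2) : a * a * a = a := by
  fin_cases a <;> rfl

theorem cube_add_of_eq_sum_smul {A : Type*} [Ring A] [Module (ZMod 2) A] {ι : Type*}
    [Fintype ι] (w : ι → A) (φ : ι → A →ₗ[ZMod 2] ZMod 2)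
    (h : ∀ x y z : A, x * y * z = ∑ i, (φ i x * φ i y * φ i z) • w i) (x y : A) :
    (x + y) ^ 3 = x ^ 3 + y ^ 3 := by
  have diag : ∀ x : A, x ^ 3 = ∑ i, φ i x • w i := fun x => by
    simp only [pow_three', h, ZMod.two_mul_self_mul_self]
  simp only [diag, map_add, add_smul, sum_add_distrib]

theorem exists_cube_add_ne_of_card_eq_four {F : Type*} [Field F] [Finite F] [CharP F 2]
    (hF : Nat.card F = 4) : ∃ x y : F, (x + y) ^ 3 ≠ x ^ 3 + y ^ 3 := by
  classical
  cases nonempty_fintype F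
  rw [Nat.card_eq_fintype_card] at hF
  have cube_eq_one : ∀ x : F, x ≠ 0 → x ^ 3 = 1 := fun x hx => by
    simpa [hF] using FiniteField.pow_card_sub_one_eq_one x hx
  obtain ⟨g, -, hg⟩ := exists_mem_notMem_of_card_lt_card (s := ({0, 1} : Finset F)) (t := univ)
    (by rw [card_univ, hF]; exact (card_le_two).trans_lt (by norm_num))
  simp only [mem_insert, mem_singleton, not_or] at hg
  obtain ⟨hg0, hg1⟩ := hg
  have h1g : 1 + g ≠ 0 := fun h => hg1 (CharTwo.add_eq_zero.mp h).symm
  refine ⟨1, g, ?_⟩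
  rw [cube_eq_one _ h1g, cube_eq_one g hg0, one_pow, CharTwo.add_self_eq_zero]
  exact one_ne_zero

/-- The `𝔽₂`-trilinear map `𝔽₄ × 𝔽₄ × 𝔽₄ → 𝔽₄`, `(x,y,z) ↦ xyz`, admits no fully
symmetric elementary decomposition: there are no `n`, `w₁,…,wₙ ∈ 𝔽₄` and `𝔽₂`-linear
forms `φ₁,…,φₙ : 𝔽₄ → 𝔽₂` with `xyz = ∑ i, φᵢ(x)φᵢ(y)φᵢ(z)·wᵢ` for all `x,y,z`. -/
theorem stmt_9 :
    ¬ ∃ (n : ℕ) (w : Fin n → GaloisField 2 2)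
        (φ : Fin n → (GaloisField 2 2 →ₗ[ZMod 2] ZMod 2)),
      ∀ x y z : GaloisField 2 2,
        x * y * z = ∑ i, (φ i x * φ i y * φ i z) • w i := by
  rintro ⟨n, w, φ, h⟩
  obtain ⟨x, y, hxy⟩ := exists_cube_add_ne_of_card_eq_four (F := GaloisField 2 2)
    (GaloisField.card 2 2 two_ne_zero)
  exact hxy (cube_add_of_eq_sum_smul w φ h x y)
end

section
/- Let q be a prime power and m = d·e with integers d, e ≥ 2, and let l ≥ 1. Then μ_q(m,l) ≤ μ_q(d) · μ_{q^d}(e,l), and likewise μ^sym_q(m,l) ≤ μ^sym_q(d) · μ^sym_{q^d}(e,l). In particular μ₃(4,2) ≤ μ₃(2)·μ₉(2,2) and μ₂(4,2) ≤ μ₂(2)·μ₄(2,2). -/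
open Finset

/-- The truncated polynomial algebra `L[t]/(t^l)`. -/
abbrev TruncAlg (L : Type*) [CommRing L] (l : ℕ) : Type _ :=
  Polynomial L ⧸ Ideal.span {(Polynomial.X : Polynomial L) ^ l}

section MulFormula

variable (K A : Type*) [Field K] [NonUnitalNonAssocRing A] [Module K A]

-- `mu K A` and `muSym K A` are, by definition, the infima of these two sets.
def mulFormulaLengths : Set ℕ :=
  {n : ℕ | ∃ (φ ψ : Fin n → (A →ₗ[K] K)) (w : Fin n → A),
    ∀ x y : A, x * y = ∑ i, (φ i x * ψ i y) • w i}

def symMulFormulaLengths : Set ℕ :=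
  {n : ℕ | ∃ (φ : Fin n → (A →ₗ[K] K)) (w : Fin n → A),
    ∀ x y : A, x * y = ∑ i, (φ i x * φ i y) • w i}

variable {K A}

theorem card_mem_mulFormulaLengths {ι : Type*} [Fintype ι] (φ ψ : ι → (A →ₗ[K] K))
    (w : ι → A) (h : ∀ x y : A, x * y = ∑ i, (φ i x * ψ i y) • w i) :
    Fintype.card ι ∈ mulFormulaLengths K A := by
  let e := Fintype.equivFin ι
  refine ⟨φ ∘ e.symm, ψ ∘ e.symm, w ∘ e.symm, fun x y => ?_⟩
  rw [h x y, ← e.symm.sum_comp]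
  rfl

theorem card_mem_symMulFormulaLengths {ι : Type*} [Fintype ι] (φ : ι → (A →ₗ[K] K))
    (w : ι → A) (h : ∀ x y : A, x * y = ∑ i, (φ i x * φ i y) • w i) :
    Fintype.card ι ∈ symMulFormulaLengths K A := by
  let e := Fintype.equivFin ι
  refine ⟨φ ∘ e.symm, w ∘ e.symm, fun x y => ?_⟩
  rw [h x y, ← e.symm.sum_comp]
  rfl

variable {F : Type*} [Field F] [Algebra K F] [Module F A] [IsScalarTower K F A]

theorem mul_mem_mulFormulaLengths {n₁ n₂ : ℕ} (h₁ : n₁ ∈ mulFormulaLengths K F)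
    (h₂ : n₂ ∈ mulFormulaLengths F A) : n₁ * n₂ ∈ mulFormulaLengths K A := by
  obtain ⟨φ, ψ, u, hF⟩ := h₁
  obtain ⟨Φ, Ψ, w, hA⟩ := h₂
  simpa using card_mem_mulFormulaLengths (ι := Fin n₁ × Fin n₂)
    (fun p => (φ p.1).comp ((Φ p.2).restrictScalars K))
    (fun p => (ψ p.1).comp ((Ψ p.2).restrictScalars K)) (fun p => u p.1 • w p.2) fun x y => by
      simp_rw [hA x y, hF (Φ _ x) (Ψ _ y), Finset.sum_smul, smul_assoc]
      rw [Fintype.sum_prod_type, Finset.sum_comm]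
      rfl

theorem mul_mem_symMulFormulaLengths {n₁ n₂ : ℕ} (h₁ : n₁ ∈ symMulFormulaLengths K F)
    (h₂ : n₂ ∈ symMulFormulaLengths F A) : n₁ * n₂ ∈ symMulFormulaLengths K A := by
  obtain ⟨φ, u, hF⟩ := h₁
  obtain ⟨Φ, w, hA⟩ := h₂
  simpa using card_mem_symMulFormulaLengths (ι := Fin n₁ × Fin n₂)
    (fun p => (φ p.1).comp ((Φ p.2).restrictScalars K)) (fun p => u p.1 • w p.2) fun x y => by
      simp_rw [hA x y, hF (Φ _ x) (Φ _ y), Finset.sum_smul, smul_assoc]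
      rw [Fintype.sum_prod_type, Finset.sum_comm]
      rfl

end MulFormula

theorem Fintype.sum_sum_eq_sum_sum_lt_add_diag {ι M : Type*} [Fintype ι] [LinearOrder ι]
    [AddCommMonoid M] (g : ι → ι → M) :
    ∑ i, ∑ j, g i j =
      ∑ i, ∑ j, ((if i < j then g i j + g j i else 0) + if i = j then g i j else 0) := by
  have hswap : ∑ i, ∑ j, (if i < j then g j i else 0) = ∑ i, ∑ j, if j < i then g i j else 0 :=
    Finset.sum_comm
  calc ∑ i, ∑ j, g i j
      = ∑ i, ∑ j, ((if i < j then g i j else 0) + (if j < i then g i j else 0)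
          + if i = j then g i j else 0) := by
        refine Finset.sum_congr rfl fun i _ => Finset.sum_congr rfl fun j _ => ?_
        rcases lt_trichotomy i j with h | rfl | h
        · simp [h, h.ne, h.not_gt]
        · simp
        · simp [h, h.ne', h.not_gt]
    _ = _ := by simp only [ite_add_zero, sum_add_distrib, hswap]

section Basis

variable {K A ι : Type*} [Field K] [Fintype ι]

theorem Module.Basis.mul_eq_sum_sum [Ring A] [Algebra K A] (b : Module.Basis ι K A) (x y : A) :
    x * y = ∑ i, ∑ j, (b.coord i x * b.coord j y) • (b i * b j) := by
  conv_lhs => rw [← b.sum_repr x, ← b.sum_repr y]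
  simp_rw [Finset.sum_mul_sum, smul_mul_smul_comm, Module.Basis.coord_apply]

theorem mulFormulaLengths_nonempty [Ring A] [Algebra K A] [FiniteDimensional K A] :
    (mulFormulaLengths K A).Nonempty :=
  let b := Module.finBasis K A
  ⟨_, card_mem_mulFormulaLengths (ι := Fin _ × Fin _) (fun p => b.coord p.1)
    (fun p => b.coord p.2) (fun p => b p.1 * b p.2) fun x y => by
      rw [b.mul_eq_sum_sum, Fintype.sum_prod_type]⟩

theorem symMulFormulaLengths_nonempty [CommRing A] [Algebra K A] [FiniteDimensional K A] :
    (symMulFormulaLengths K A).Nonempty := by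
  let b := Module.finBasis K A
  let c := b.coord
  -- polarization without dividing by 2: for `i < j`,
  -- `x_i y_j + x_j y_i = (x_i + x_j)(y_i + y_j) - x_i y_i - x_j y_j`
  let P i j := if i < j then b i * b j else 0
  let D i j := if i = j then b i * b j else 0
  refine ⟨_, card_mem_symMulFormulaLengths (ι := (Fin _ × Fin _) × Fin 3)
    (fun p => ![c p.1.1 + c p.1.2, c p.1.1, c p.1.2] p.2)
    (fun p => ![P p.1.1 p.1.2, D p.1.1 p.1.2 - P p.1.1 p.1.2, -P p.1.1 p.1.2] p.2) fun x y => ?_⟩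
  rw [b.mul_eq_sum_sum, Fintype.sum_sum_eq_sum_sum_lt_add_diag, Fintype.sum_prod_type,
    Fintype.sum_prod_type]
  refine Finset.sum_congr rfl fun i _ => Finset.sum_congr rfl fun j _ => ?_
  simp only [Fin.sum_univ_three, Matrix.cons_val_zero, Matrix.cons_val_one, Matrix.cons_val_two,
    Matrix.head_cons, Matrix.tail_cons, LinearMap.add_apply, P, D]
  rcases lt_trichotomy i j with h | rfl | h
  · simp only [if_pos h, if_neg h.ne, mul_comm (b j) (b i)]
    module
  · simp only [lt_irrefl, if_false, if_true]
    module
  · simp only [if_neg h.not_gt, if_neg h.ne']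
    module

end Basis

section Tower

variable (K F A : Type*) [Field K] [Field F] [Algebra K F] [FiniteDimensional K F]

theorem mu_le_mu_mul_mu [Ring A] [Algebra K A] [Algebra F A] [IsScalarTower K F A]
    [FiniteDimensional F A] : mu K A ≤ mu K F * mu F A :=
  Nat.sInf_le <| mul_mem_mulFormulaLengths (Nat.sInf_mem mulFormulaLengths_nonempty)
    (Nat.sInf_mem mulFormulaLengths_nonempty)

theorem muSym_le_muSym_mul_muSym [CommRing A] [Algebra K A] [Algebra F A]
    [IsScalarTower K F A] [FiniteDimensional F A] : muSym K A ≤ muSym K F * muSym F A :=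
  Nat.sInf_le <| mul_mem_symMulFormulaLengths (Nat.sInf_mem symMulFormulaLengths_nonempty)
    (Nat.sInf_mem symMulFormulaLengths_nonempty)

end Tower

instance TruncAlg.finite (L : Type*) [CommRing L] [Finite L] (l : ℕ) : Finite (TruncAlg L l) :=
  have := (Polynomial.monic_X_pow (R := L) l).finite_quotient
  Module.finite_of_finite L

theorem stmt_14_general (q d e l : ℕ) (hq : IsPrimePow q)
    (K F L : Type*) [Field K] [Field F] [Field L]
    [Algebra K F] [Algebra F L] [Algebra K L] [IsScalarTower K F L]
    (hL : Nat.card L = q ^ (d * e)) :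
    mu K (TruncAlg L l) ≤ mu K F * mu F (TruncAlg L l) ∧
    muSym K (TruncAlg L l) ≤ muSym K F * muSym F (TruncAlg L l) := by
  have : Finite L := Nat.finite_of_card_ne_zero (hL ▸ pow_ne_zero _ hq.ne_zero)
  have : Finite F := Finite.of_injective _ (algebraMap F L).injective
  exact ⟨mu_le_mu_mul_mu K F _, muSym_le_muSym_mul_muSym K F _⟩

/-- If `m = d·e` with `d, e ≥ 2` and `l ≥ 1`, then, with `K = 𝔽_q`, `F = 𝔽_{q^d}` and
`L = 𝔽_{q^m} = 𝔽_{(q^d)^e}`: `μ_q(m,l) ≤ μ_q(d) · μ_{q^d}(e,l)`, and likewise for the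
symmetric bilinear complexities.  In particular (taking `q = 3, d = e = l = 2`, resp.
`q = 2, d = e = l = 2`) one gets `μ₃(4,2) ≤ μ₃(2)·μ₉(2,2)` and
`μ₂(4,2) ≤ μ₂(2)·μ₄(2,2)`. -/
theorem stmt_14 (q d e l : ℕ) (hq : IsPrimePow q) (hd : 2 ≤ d) (he : 2 ≤ e) (hl : 1 ≤ l)
    (K F L : Type*) [Field K] [Field F] [Field L]
    [Algebra K F] [Algebra F L] [Algebra K L] [IsScalarTower K F L]
    (hK : Nat.card K = q) (hF : Nat.card F = q ^ d) (hL : Nat.card L = q ^ (d * e)) :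
    mu K (TruncAlg L l) ≤ mu K F * mu F (TruncAlg L l) ∧
    muSym K (TruncAlg L l) ≤ muSym K F * muSym F (TruncAlg L l) :=
  stmt_14_general q d e l hq K F L hL
end

section
/- Let q be a prime power and m, l ≥ 1 integers with ml ≤ q/2 + 1. Then μ_q(m,l) ≤ μ^sym_q(m,l) ≤ 2ml − 1. -/
open Finset

/-!
If `α` generates `𝔽_{q^m}` over `𝔽_q`, then `θ = α + t` generates `𝔽_{q^m}[t]/(t^l)` over `𝔽_q`:
a polynomial `g` over `𝔽_q` vanishes at `θ` iff `(X - α)^l` divides `g`, and since the minimal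
polynomial of `α` is separable this forces its `l`-th power, of degree `ml`, to divide `g`.
So the algebra has the power basis `1, θ, …, θ^(ml-1)`. The product of two polynomials of
degree `< ml` has degree `≤ 2ml - 2`, hence is determined by its values at `2ml - 2` distinct
points of `𝔽_q` (there are enough of them since `ml ≤ q/2 + 1`) together with its leading
coefficient; each of these `2ml - 1` numbers is a product `λ(x) λ(y)` of one linear form.
-/

open Polynomial

theorem Lagrange.eq_interpolate_add_C_coeff_mul_nodal {F ι : Type*} [Field F] [DecidableEq ι]
    {s : Finset ι} {v : ι → F} (hvs : Set.InjOn v s) {f : F[X]} (hf : f.natDegree ≤ #s) :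
    f = interpolate s v (fun i => f.eval (v i)) + C (f.coeff #s) * nodal s v := by
  set g := f - C (f.coeff #s) * nodal s v
  have hg : g.degree < #s := by
    rw [degree_lt_iff_coeff_zero]
    intro k hk
    have hk' : #s ≤ k := by exact_mod_cast hk
    rcases hk'.eq_or_lt with heq | hlt
    · have h1 : (nodal s v).coeff #s = 1 := by
        simpa [natDegree_nodal] using (nodal_monic (s := s) (v := v)).coeff_natDegree
      simp [g, coeff_C_mul, ← heq, h1]
    · simp [g, coeff_C_mul, coeff_eq_zero_of_natDegree_lt (hf.trans_lt hlt),
        coeff_eq_zero_of_natDegree_lt ((natDegree_nodal (s := s) (v := v)).trans_lt hlt)]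
  have hnodes : ∀ i ∈ s, g.eval (v i) = f.eval (v i) := fun i hi => by
    simp [g, eval_nodal_at_node hi]
  rw [← interpolate_eq_of_values_eq_on _ _ hnodes, ← eq_interpolate hvs hg, sub_add_cancel]

def HasSymBilinearAlgorithm (K A : Type*) [Field K] [NonUnitalNonAssocRing A] [Module K A]
    (n : ℕ) : Prop :=
  ∃ (φ : Fin n → (A →ₗ[K] K)) (w : Fin n → A), ∀ x y : A, x * y = ∑ i, (φ i x * φ i y) • w i

section Complexity

variable {K A : Type*} [Field K] [NonUnitalNonAssocRing A] [Module K A] {n : ℕ}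

theorem muSym_le_of_hasSymBilinearAlgorithm (h : HasSymBilinearAlgorithm K A n) :
    muSym K A ≤ n :=
  Nat.sInf_le h

theorem mu_le_muSym_of_hasSymBilinearAlgorithm (h : HasSymBilinearAlgorithm K A n) :
    mu K A ≤ muSym K A := by
  obtain ⟨φ, w, hφw⟩ := Nat.sInf_mem (s := {n | HasSymBilinearAlgorithm K A n}) ⟨n, h⟩
  exact Nat.sInf_le ⟨φ, φ, w, hφw⟩

end Complexity

namespace PowerBasis

variable {K A : Type*} [Field K] [Ring A] [Algebra K A] (pb : PowerBasis K A)

noncomputable def toPolynomial : A →ₗ[K] K[X] :=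
  pb.basis.constr K fun i => X ^ (i : ℕ)

theorem aeval_toPolynomial (x : A) : aeval pb.gen (pb.toPolynomial x) = x := by
  have : (aeval pb.gen).toLinearMap ∘ₗ pb.toPolynomial = LinearMap.id :=
    pb.basis.ext fun i => by
      rw [LinearMap.comp_apply, toPolynomial, Module.Basis.constr_basis, pb.basis_eq_pow]
      simp
  exact LinearMap.congr_fun this x

theorem natDegree_toPolynomial_le (x : A) : (pb.toPolynomial x).natDegree ≤ pb.dim - 1 := by
  rw [toPolynomial, pb.basis.constr_apply_fintype K]
  refine natDegree_sum_le_of_forall_le _ _ fun i _ => ?_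
  exact (natDegree_smul_le _ _).trans ((natDegree_X_pow_le (R := K) _).trans (by omega))

theorem hasSymBilinearAlgorithm [Nontrivial A] (a : Fin (2 * pb.dim - 2) ↪ K) :
    HasSymBilinearAlgorithm K A (2 * pb.dim - 1) := by
  classical
  set N := 2 * pb.dim - 2
  have hN : 2 * pb.dim - 1 = N + 1 := by have := pb.dim_pos; omega
  rw [hN]
  refine ⟨Fin.snoc (fun i => (leval (a i)).comp pb.toPolynomial)
      ((lcoeff K (pb.dim - 1)).comp pb.toPolynomial),
    Fin.snoc (fun i => aeval pb.gen (Lagrange.basis univ a i))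
      (aeval pb.gen (Lagrange.nodal univ a)), fun x y => ?_⟩
  have hdeg : (pb.toPolynomial x * pb.toPolynomial y).natDegree ≤ #(univ : Finset (Fin N)) := by
    rw [card_univ, Fintype.card_fin]
    exact natDegree_mul_le.trans (by
      have := pb.natDegree_toPolynomial_le x; have := pb.natDegree_toPolynomial_le y; omega)
  have htop : (pb.toPolynomial x * pb.toPolynomial y).coeff #(univ : Finset (Fin N)) =
      (pb.toPolynomial x).coeff (pb.dim - 1) * (pb.toPolynomial y).coeff (pb.dim - 1) := by
    rw [card_univ, Fintype.card_fin, show N = (pb.dim - 1) + (pb.dim - 1) by omega]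
    exact coeff_mul_add_eq_of_natDegree_le (pb.natDegree_toPolynomial_le x)
      (pb.natDegree_toPolynomial_le y)
  calc x * y = aeval pb.gen (pb.toPolynomial x * pb.toPolynomial y) := by
        rw [map_mul, pb.aeval_toPolynomial, pb.aeval_toPolynomial]
    _ = _ := by
        rw [Lagrange.eq_interpolate_add_C_coeff_mul_nodal a.injective.injOn hdeg, htop]
        simp [Fin.sum_univ_castSucc, Lagrange.interpolate_apply, Algebra.smul_def]

end PowerBasis

theorem minpoly_pow_dvd_of_X_sub_C_pow_dvd {K L : Type*} [Field K] [Field L] [Algebra K L]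
    {α : L} (hα : IsSeparable K α) {j : ℕ} {g : K[X]}
    (h : (X - C α) ^ j ∣ g.map (algebraMap K L)) : minpoly K α ^ j ∣ g := by
  induction j generalizing g with
  | zero => simp
  | succ j ih =>
    have hroot : aeval α g = 0 := by
      rw [aeval_def, ← eval_map, ← IsRoot.def, ← dvd_iff_isRoot]
      exact (dvd_pow_self _ j.succ_ne_zero).trans h
    obtain ⟨c, rfl⟩ := minpoly.dvd K α hroot
    obtain ⟨u, hu⟩ : X - C α ∣ (minpoly K α).map (algebraMap K L) := by
      rw [dvd_iff_isRoot, IsRoot, eval_map, ← aeval_def, minpoly.aeval]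
    have hu_coprime : ¬ X - C α ∣ u := fun ⟨v, hv⟩ => not_isUnit_X_sub_C α <|
      (Separable.map hα).squarefree _ ⟨v, by rw [hu, hv, mul_assoc]⟩
    rw [Polynomial.map_mul, hu, pow_succ', mul_assoc] at h
    have hc := (prime_X_sub_C α).pow_dvd_of_dvd_mul_left _ hu_coprime
      ((mul_dvd_mul_iff_left (X_sub_C_ne_zero α)).mp h)
    rw [pow_succ']
    exact mul_dvd_mul_left _ (ih hc)

theorem exists_powerBasis_of_finrank_le_natDegree_minpoly {K S : Type*} [Field K] [CommRing S]
    [Algebra K S] [FiniteDimensional K S] {x : S}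
    (h : Module.finrank K S ≤ (minpoly K x).natDegree) :
    ∃ pb : PowerBasis K S, pb.dim = Module.finrank K S := by
  have hcard : Fintype.card (Fin (minpoly K x).natDegree) = Module.finrank K S := by
    rw [Fintype.card_fin]
    exact (minpoly.natDegree_le x).antisymm h
  refine ⟨⟨x, _, basisOfLinearIndependentOfCardEqFinrank' _ (linearIndependent_pow x) hcard,
    fun i => by simp⟩, by simpa using hcard⟩

namespace TruncAlg

variable {L : Type*} [Field L] (l : ℕ)

theorem aeval_algebraMap_add_mk_X (α : L) (g : L[X]) :
    aeval (algebraMap L (TruncAlg L l) α + Ideal.Quotient.mk _ X) g =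
      Ideal.Quotient.mk _ (taylor α g) := by
  rw [taylor_apply, comp_eq_aeval, ← Ideal.Quotient.mkₐ_eq_mk L, ← aeval_algHom_apply, map_add,
    add_comm]
  rfl

theorem aeval_algebraMap_add_mk_X_eq_zero_iff (α : L) (g : L[X]) :
    aeval (algebraMap L (TruncAlg L l) α + Ideal.Quotient.mk _ X) g = 0 ↔ (X - C α) ^ l ∣ g := by
  rw [aeval_algebraMap_add_mk_X, Ideal.Quotient.eq_zero_iff_mem, Ideal.mem_span_singleton,
    ← map_dvd_iff (taylorEquiv (-α))]
  change taylor (-α) (X ^ l) ∣ taylor (-α) (taylor α g) ↔ _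
  rw [taylor_taylor, neg_add_cancel, taylor_zero, taylor_pow, taylor_X, map_neg, ← sub_eq_add_neg]

instance : Module.Finite L (TruncAlg L l) :=
  (AdjoinRoot.powerBasis' (monic_X_pow (R := L) l)).finite

theorem finrank_eq : Module.finrank L (TruncAlg L l) = l :=
  (AdjoinRoot.powerBasis' (monic_X_pow (R := L) l)).finrank.trans (natDegree_X_pow l)

theorem exists_powerBasis (K : Type*) [Field K] [Algebra K L] [FiniteDimensional K L]
    [Algebra.IsSeparable K L] :
    ∃ pb : PowerBasis K (TruncAlg L l), pb.dim = Module.finrank K L * l := by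
  obtain ⟨α, hα⟩ := Field.exists_primitive_element K L
  have hdegα := (Field.primitive_element_iff_minpoly_natDegree_eq K α).mp hα
  have hfinrank : Module.finrank K (TruncAlg L l) = Module.finrank K L * l := by
    rw [← Module.finrank_mul_finrank K L, finrank_eq]
  have : FiniteDimensional K (TruncAlg L l) := Module.Finite.trans L _
  set θ := algebraMap L (TruncAlg L l) α + Ideal.Quotient.mk _ X
  have hdvd : minpoly K α ^ l ∣ minpoly K θ := by
    refine minpoly_pow_dvd_of_X_sub_C_pow_dvd (Algebra.IsSeparable.isSeparable K α) ?_
    rw [← aeval_algebraMap_add_mk_X_eq_zero_iff, aeval_map_algebraMap, minpoly.aeval]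
  rw [← hfinrank]
  refine exists_powerBasis_of_finrank_le_natDegree_minpoly (x := θ) ?_
  rw [hfinrank, ← hdegα, mul_comm, ← natDegree_pow]
  exact natDegree_le_of_dvd hdvd (minpoly.ne_zero (IsIntegral.of_finite K θ))

end TruncAlg

/-- If `q` is a prime power and `m, l ≥ 1` satisfy `ml ≤ q/2 + 1`, then, with `K = 𝔽_q`
and `L = 𝔽_{q^m}`: `μ_q(m,l) ≤ μ^sym_q(m,l) ≤ 2ml - 1`. -/
theorem stmt_15 (q m l : ℕ) (hq : IsPrimePow q) (hm : 1 ≤ m) (hl : 1 ≤ l)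
    (hml : (m * l : ℚ) ≤ (q : ℚ) / 2 + 1)
    (K L : Type*) [Field K] [Field L] [Algebra K L]
    (hK : Nat.card K = q) (hL : Nat.card L = q ^ m) :
    mu K (TruncAlg L l) ≤ muSym K (TruncAlg L l) ∧
    muSym K (TruncAlg L l) ≤ 2 * (m * l) - 1 := by
  have hq2 := hq.two_le
  have : Finite K := Nat.finite_of_card_ne_zero (by omega)
  have : Finite L := Nat.finite_of_card_ne_zero (by rw [hL]; positivity)
  have : FiniteDimensional K L := Module.Finite.of_finite
  have hfinrank : Module.finrank K L = m := by
    rw [Module.natCard_eq_pow_finrank (K := K), hK] at hL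
    exact Nat.pow_right_injective hq2 hL
  obtain ⟨pb, hdim⟩ := TruncAlg.exists_powerBasis (L := L) l K
  rw [hfinrank] at hdim
  have : Nontrivial (TruncAlg L l) :=
    Module.nontrivial_of_finrank_pos (R := K) (by rw [pb.finrank, hdim]; positivity)
  have hnodes : 2 * pb.dim - 2 ≤ Nat.card K := by
    rw [hdim, hK]
    have : 2 * (m * l) ≤ q + 2 := by exact_mod_cast (by linarith : (2 * (m * l) : ℚ) ≤ q + 2)
    omega
  have halg := pb.hasSymBilinearAlgorithm
    ((Fin.castLEEmb hnodes).trans (Finite.equivFin K).symm.toEmbedding)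
  rw [hdim] at halg
  exact ⟨mu_le_muSym_of_hasSymBilinearAlgorithm halg, muSym_le_of_hasSymBilinearAlgorithm halg⟩
end
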